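/- Let α be an uncountable cardinal and let ℤ* denote the set of nonzero integers. Let 𝒜 be the L-structure with universe α × ℤ* and O((x₁,x₂),(y₁,y₂)) iff x₁ = y₁ and x₂·y₂ < 0, and let ℬ be the L-structure with universe ℤ* × α and O((x₁,x₂),(y₁,y₂)) iff x₁ = −y₁. Then 𝒜 and ℬ are both models of SAPP, both have cardinality α, and there is no isomorphism between 𝒜 and ℬ. -/

import Mathlib

open FirstOrder Language Structure BoundedFormula

/-- The relation symbols of the language `L`: a single binary relation `O`. -/
inductive PerpRel : ℕ → Type
  | o : PerpRel 2

/-- The first-order language with a single binary relation symbol `O`. -/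
def L : Language := ⟨fun _ => Empty, PerpRel⟩
  deriving IsRelational

/-- The binary relation symbol `O` of `L`. -/
abbrev oSym : L.Relations 2 := .o

/-- `O(xᵢ, xⱼ)` as a bounded formula. -/
def oBF {n : ℕ} (i j : Fin n) : L.BoundedFormula Empty n :=
  oSym.boundedFormula₂ (&i) (&j)

/-- Finite conjunction of a list of bounded formulas. -/
def andAll {n : ℕ} : List (L.BoundedFormula Empty n) → L.BoundedFormula Empty n
  | [] => ⊤
  | φ :: l => φ ⊓ andAll l

/-- λ₁ₙ : ∀y₁…∀yₙ∀s(O(s,y₁) ∧ … ∧ O(s,yₙ) → ∃t(t ≠ y₁ ∧ … ∧ t ≠ yₙ ∧ O(s,t))).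
Variables: y₁,…,yₙ are de Bruijn indices 0,…,n-1, s is index n, t is index n+1. -/
def lam1 (n : ℕ) : L.Sentence :=
  ((andAll ((List.finRange n).map fun i => oBF (Fin.last n) i.castSucc)).imp
    ((andAll ((List.finRange n).map fun i =>
        ∼((&(Fin.last (n + 1))) =' (&(i.castSucc.castSucc)))) ⊓
      oBF ((Fin.last n).castSucc) (Fin.last (n + 1))).ex)).alls

/-- λ₂ₙ : ∀y₁…∀yₙ∃s(¬O(s,y₁) ∧ … ∧ ¬O(s,yₙ)).
Variables: y₁,…,yₙ are de Bruijn indices 0,…,n-1, s is index n. -/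
def lam2 (n : ℕ) : L.Sentence :=
  ((andAll ((List.finRange n).map fun i => ∼(oBF (Fin.last n) i.castSucc))).ex).alls

/-- λ₃ : ∀x ¬O(x,x). -/
def lam3 : L.Sentence := (∼(oBF (0 : Fin 1) 0)).alls

/-- λ₄ : ∀x∀y(O(x,y) → O(y,x)). -/
def lam4 : L.Sentence := ((oBF (0 : Fin 2) 1).imp (oBF (1 : Fin 2) 0)).alls

/-- λ₅ : ∀x∃y O(x,y). -/
def lam5 : L.Sentence := ((oBF (0 : Fin 2) 1).ex).alls

/-- λ₆ : ∀x∀y∀z∀t(O(x,z) ∧ O(y,z) ∧ O(x,t) → O(y,t)). -/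
def lam6 : L.Sentence :=
  ((oBF (0 : Fin 4) 2 ⊓ oBF (1 : Fin 4) 2 ⊓ oBF (0 : Fin 4) 3).imp (oBF (1 : Fin 4) 3)).alls

/-- The theory SAPP. -/
def SAPP : L.Theory :=
  {φ | ∃ n, 1 ≤ n ∧ φ = lam1 n} ∪ {φ | ∃ n, 2 ≤ n ∧ φ = lam2 n} ∪ {lam3, lam4, lam5, lam6}

universe u

/-- The nonzero integers ℤ*. -/
abbrev ZStar : Type := {z : ℤ // z ≠ 0}

/-- The universe of 𝒜: α × ℤ* (a type of cardinality α times the nonzero integers). -/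
abbrev AType (α : Cardinal.{u}) : Type u := α.out × ULift.{u} ZStar

/-- The universe of ℬ: ℤ* × α. -/
abbrev BType (α : Cardinal.{u}) : Type u := ULift.{u} ZStar × α.out

/-- The structure 𝒜: O((x₁,x₂),(y₁,y₂)) iff x₁ = y₁ and x₂·y₂ < 0. -/
instance (α : Cardinal.{u}) : L.Structure (AType α) where
  RelMap | .o => fun x => (x 0).1 = (x 1).1 ∧ (x 0).2.down.val * (x 1).2.down.val < 0

/-- The structure ℬ: O((x₁,x₂),(y₁,y₂)) iff x₁ = −y₁. -/
instance (α : Cardinal.{u}) : L.Structure (BType α) where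
  RelMap | .o => fun x => (x 0).1.down.val = -((x 1).1.down.val)


/-!
Both structures are disjoint unions of complete bipartite graphs: in 𝒜 each fibre {a} × ℤ* is one,
with its negative and positive halves as sides; in ℬ each pair of fibres {n} × α, {-n} × α is one.
SAPP then reduces to facts about these graphs: every O-neighbourhood is infinite (λ₁, λ₅), finitely
many points have a common non-neighbour (λ₂), and two points with a common neighbour have the same
neighbourhood (λ₆). The structures are told apart by the size of an O-neighbourhood: it is
countable in 𝒜, but has size α in ℬ.
-/

section Realize

variable {M : Type*} [L.Structure M]

def oRel (x y : M) : Prop := Structure.RelMap oSym ![x, y]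

def oNbhd (x : M) : Set M := {t | oRel x t}

@[simp] lemma mem_oNbhd {x t : M} : t ∈ oNbhd x ↔ oRel x t := Iff.rfl

@[simp] lemma realize_oBF {n : ℕ} (i j : Fin n) (v : Empty → M) (xs : Fin n → M) :
    (oBF i j).Realize v xs ↔ oRel (xs i) (xs j) := by
  simp [oBF, oRel]

@[simp] lemma realize_andAll {n : ℕ} (l : List (L.BoundedFormula Empty n))
    (v : Empty → M) (xs : Fin n → M) :
    (andAll l).Realize v xs ↔ ∀ φ ∈ l, φ.Realize v xs := by
  induction l with
  | nil => simp [andAll]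
  | cons φ l ih => simp [andAll, ih]

lemma realize_lam1 {n : ℕ} (h : ∀ x : M, (oNbhd x).Infinite) : (lam1 n).Realize M := by
  simp only [lam1, Sentence.Realize, realize_alls, realize_imp, realize_ex, realize_inf,
    realize_andAll, List.mem_map, List.mem_finRange, true_and, forall_exists_index,
    forall_apply_eq_imp_iff, realize_oBF, realize_not, BoundedFormula.realize_bdEqual]
  intro xs _
  obtain ⟨t, ht, hfresh⟩ := (h (xs (Fin.last n))).exists_notMem_finite
    (Set.finite_range fun i : Fin n => xs i.castSucc)
  exact ⟨t, fun i hi => hfresh ⟨i, by simpa using hi.symm⟩, by simpa using ht⟩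

lemma realize_lam2 {n : ℕ} (h : ∀ Y : Set M, Y.Finite → ∃ s, ∀ y ∈ Y, ¬ oRel s y) :
    (lam2 n).Realize M := by
  simp only [lam2, Sentence.Realize, realize_alls, realize_ex, realize_andAll, List.mem_map,
    List.mem_finRange, true_and, forall_exists_index, forall_apply_eq_imp_iff, realize_not,
    realize_oBF]
  intro xs
  obtain ⟨s, hs⟩ := h _ (Set.finite_range xs)
  exact ⟨s, fun i => by simpa using hs _ ⟨i, rfl⟩⟩

lemma realize_lam3 (h : ∀ x : M, ¬ oRel x x) : lam3.Realize M := by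
  simp [lam3, Sentence.Realize, h _]

lemma realize_lam4 (h : ∀ x y : M, oRel x y → oRel y x) : lam4.Realize M := by
  simp only [lam4, Sentence.Realize, realize_alls, realize_imp, realize_oBF]
  exact fun xs => h _ _

lemma realize_lam5 (h : ∀ x : M, ∃ y, oRel x y) : lam5.Realize M := by
  simpa [lam5, Sentence.Realize, Fin.snoc] using fun xs : Fin 1 → M => h (xs 0)

lemma realize_lam6 (h : ∀ x y z t : M, oRel x z → oRel y z → oRel x t → oRel y t) :
    lam6.Realize M := by
  simp only [lam6, Sentence.Realize, realize_alls, realize_imp, realize_inf, realize_oBF, and_imp]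
  exact fun xs => h _ _ _ _

theorem model_SAPP_of (h_infinite : ∀ x : M, (oNbhd x).Infinite)
    (h_avoid : ∀ Y : Set M, Y.Finite → ∃ s, ∀ y ∈ Y, ¬ oRel s y)
    (h_irrefl : ∀ x : M, ¬ oRel x x) (h_symm : ∀ x y : M, oRel x y → oRel y x)
    (h_shared : ∀ x y z t : M, oRel x z → oRel y z → oRel x t → oRel y t) : M ⊨ SAPP := by
  rw [Theory.model_iff]
  rintro φ ((⟨n, -, rfl⟩ | ⟨n, -, rfl⟩) | (rfl | rfl | rfl | rfl))
  exacts [realize_lam1 h_infinite, realize_lam2 h_avoid, realize_lam3 h_irrefl,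
    realize_lam4 h_symm, realize_lam5 fun x => (h_infinite x).nonempty, realize_lam6 h_shared]

end Realize

namespace FirstOrder.Language.Equiv

variable {M N : Type*} [L.Structure M] [L.Structure N]

lemma oRel_apply_iff (f : M ≃[L] N) (x y : M) : oRel (f x) (f y) ↔ oRel x y := by
  have hcomp : f ∘ ![x, y] = ![f x, f y] := by
    ext i
    fin_cases i <;> rfl
  simpa only [oRel, hcomp] using f.map_rel oSym ![x, y]

lemma oNbhd_apply (f : M ≃[L] N) (x : M) : oNbhd (f x) = f '' oNbhd x := by
  ext t
  obtain ⟨s, rfl⟩ := EquivLike.surjective f t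
  simp [oRel_apply_iff]

end FirstOrder.Language.Equiv

theorem mul_neg_of_mul_neg_of_mul_neg_of_mul_neg {R : Type*} [CommRing R] [LinearOrder R]
    [IsStrictOrderedRing R] {x y z t : R} (hxz : x * z < 0) (hyz : y * z < 0) (hxt : x * t < 0) :
    y * t < 0 := by
  nlinarith [mul_pos_of_neg_of_neg hxz hyz, mul_pos_of_neg_of_neg hxz hxt]

instance : Infinite ZStar := (Set.finite_singleton (0 : ℤ)).infinite_compl.to_subtype

def ZStar.neg (z : ZStar) : ZStar := ⟨-z.val, neg_ne_zero.2 z.2⟩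

section Models

open Cardinal

variable {α : Cardinal.{u}}

lemma infinite_out (hα : ℵ₀ ≤ α) : Infinite α.out :=
  infinite_iff.2 (by rwa [mk_out])

lemma mk_uLift_ZStar : #(ULift.{u} ZStar) = ℵ₀ := mk_eq_aleph0 _

lemma mk_AType (hα : ℵ₀ ≤ α) : #(AType α) = α := by
  rw [mk_prod, lift_id, lift_id, mk_out, mk_uLift_ZStar]
  exact mul_eq_left hα hα aleph0_ne_zero

lemma mk_BType (hα : ℵ₀ ≤ α) : #(BType α) = α := by
  rw [mk_prod, lift_id, lift_id, mk_out, mk_uLift_ZStar]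
  exact mul_eq_right hα hα aleph0_ne_zero

lemma oRel_AType {x y : AType α} :
    oRel x y ↔ x.1 = y.1 ∧ x.2.down.val * y.2.down.val < 0 := Iff.rfl

lemma oRel_BType {x y : BType α} : oRel x y ↔ x.1.down.val = -y.1.down.val := Iff.rfl

lemma infinite_oNbhd_AType (x : AType α) : (oNbhd x).Infinite := by
  have hx := x.2.down.2
  refine Set.infinite_of_injective_forall_mem
    (f := fun n : ℕ => (x.1, ULift.up ⟨-x.2.down.val * (n + 1),
      mul_ne_zero (neg_ne_zero.2 hx) (by omega)⟩)) ?_ fun n => ?_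
  · intro m n h
    simpa [hx] using congrArg (fun p : AType α => p.2.down.val) h
  · refine mem_oNbhd.2 ⟨rfl, ?_⟩
    show x.2.down.val * (-x.2.down.val * (n + 1)) < 0
    nlinarith [mul_self_pos.2 hx]

lemma countable_oNbhd_AType (x : AType α) : (oNbhd x).Countable :=
  (Set.countable_range (Prod.mk x.1)).mono fun t ht =>
    Set.mem_range.2 ⟨t.2, Prod.ext (oRel_AType.1 ht).1 rfl⟩

lemma oNbhd_BType (x : BType α) : oNbhd x = Set.range (Prod.mk (ULift.up x.1.down.neg)) := by
  ext t
  refine ⟨fun h => ⟨t.2, Prod.ext (ULift.ext _ _ (Subtype.ext ?_)) rfl⟩, ?_⟩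
  · simp [ZStar.neg, oRel_BType.1 h]
  · rintro ⟨a, rfl⟩
    exact oRel_BType.2 (neg_neg _).symm

lemma infinite_oNbhd_BType [Infinite α.out] (x : BType α) : (oNbhd x).Infinite := by
  rw [oNbhd_BType]
  exact Set.infinite_range_of_injective (Prod.mk_right_injective _)

lemma not_countable_oNbhd_BType (hα : ℵ₀ < α) (x : BType α) : ¬ (oNbhd x).Countable := by
  rw [oNbhd_BType, ← le_aleph0_iff_set_countable, mk_range_eq _ (Prod.mk_right_injective _),
    mk_out]
  exact hα.not_ge

theorem AType_model_SAPP (hα : ℵ₀ ≤ α) : AType α ⊨ SAPP := by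
  have := infinite_out hα
  refine model_SAPP_of infinite_oNbhd_AType (fun Y hY => ?_) (fun x h => ?_) (fun x y h => ?_)
    (fun x y z t hxz hyz hxt => ?_)
  · obtain ⟨a, -, ha⟩ := Set.infinite_univ.exists_notMem_finite (hY.image Prod.fst)
    refine ⟨(a, ULift.up ⟨1, one_ne_zero⟩), fun y hy h => ha ?_⟩
    exact ⟨y, hy, (oRel_AType.1 h).1.symm⟩
  · exact (mul_self_nonneg _).not_gt (oRel_AType.1 h).2
  · obtain ⟨h1, h2⟩ := oRel_AType.1 h
    exact ⟨h1.symm, by rwa [mul_comm]⟩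
  · rw [oRel_AType] at *
    exact ⟨hyz.1.trans (hxz.1.symm.trans hxt.1),
      mul_neg_of_mul_neg_of_mul_neg_of_mul_neg hxz.2 hyz.2 hxt.2⟩

theorem BType_model_SAPP (hα : ℵ₀ ≤ α) : BType α ⊨ SAPP := by
  have := infinite_out hα
  refine model_SAPP_of infinite_oNbhd_BType (fun Y hY => ?_) (fun x h => ?_) (fun x y h => ?_)
    (fun x y z t hxz hyz hxt => ?_)
  · obtain ⟨k, -, hk⟩ := Set.infinite_univ.exists_notMem_finite
      ((hY.image fun y : BType α => -y.1.down.val).insert 0)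
    refine ⟨(ULift.up ⟨k, fun h => hk (.inl h)⟩, Classical.arbitrary _), fun y hy h => hk ?_⟩
    exact .inr ⟨y, hy, (oRel_BType.1 h).symm⟩
  · have := x.1.down.2
    have := oRel_BType.1 h
    omega
  · rw [oRel_BType] at *
    omega
  · rw [oRel_BType] at *
    omega

theorem isEmpty_equiv_AType_BType (hα : ℵ₀ < α) : IsEmpty (AType α ≃[L] BType α) := by
  refine ⟨fun f => ?_⟩
  have := infinite_out hα.le
  obtain ⟨b⟩ : Nonempty (BType α) := inferInstance
  apply not_countable_oNbhd_BType hα b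
  rw [← f.apply_symm_apply b, f.oNbhd_apply]
  exact (countable_oNbhd_AType _).image f

end Models

/-- 𝒜 and ℬ are models of SAPP of cardinality α that are not isomorphic. -/
theorem statement_19 (α : Cardinal.{u}) (hα : Cardinal.aleph0 < α) :
    AType α ⊨ SAPP ∧ BType α ⊨ SAPP ∧
      Cardinal.mk (AType α) = α ∧ Cardinal.mk (BType α) = α ∧
      IsEmpty (AType α ≃[L] BType α) :=
  ⟨AType_model_SAPP hα.le, BType_model_SAPP hα.le, mk_AType hα.le, mk_BType hα.le,
    isEmpty_equiv_AType_BType hα⟩
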